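/- Let a: ℤ → GL(d, ℝ) be the piecewise-constant asymptotically hyperbolic system a_n = a₊ for n ≥ 0 and a_n = a₋ for n < 0, with a₊, a₋ hyperbolic. Then the kernel of the operator L on ℓ²(ℤ, ℝᵈ), (Lx)(n) = x(n+1) − a_n x(n), consists exactly of the sequences x with x(0) ∈ Eˢ(a₊) ∩ Eᵘ(a₋), x(n) = a₊ⁿ x(0) for n ≥ 0, and x(n) = a₋ⁿ x(0) for n ≤ 0; in particular dim ker L = dim (Eˢ(a₊) ∩ Eᵘ(a₋)). -/

import Mathlib

open Filter Topology

noncomputable section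

/-- The Hilbert space `ℓ²(ℤ, ℝᵈ)` of square-summable doubly infinite sequences. -/
abbrev L2 (d : ℕ) := lp (fun _ : ℤ => EuclideanSpace ℝ (Fin d)) 2

/-- The action of a `d × d` real matrix on `EuclideanSpace ℝ (Fin d)`. -/
abbrev matOp {d : ℕ} (M : Matrix (Fin d) (Fin d) ℝ) :
    EuclideanSpace ℝ (Fin d) →L[ℝ] EuclideanSpace ℝ (Fin d) :=
  Matrix.toEuclideanCLM (𝕜 := ℝ) M

/-- The `ℝ`-linear inclusion of `EuclideanSpace ℝ (Fin d)` into `Fin d → ℂ`. -/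
def complexify (d : ℕ) : (EuclideanSpace ℝ (Fin d)) →ₗ[ℝ] (Fin d → ℂ) :=
  (LinearMap.compLeft Complex.ofRealAm.toLinearMap (Fin d)).comp
    (WithLp.linearEquiv 2 ℝ (Fin d → ℝ)).toLinearMap

/-- Real vectors whose complexification lies in the sum of the generalized eigenspaces
of `a` for eigenvalues in `s ⊆ ℂ`. -/
def genSpace {d : ℕ} (a : Matrix (Fin d) (Fin d) ℝ) (s : Set ℂ) :
    Submodule ℝ (EuclideanSpace ℝ (Fin d)) :=
  ((⨆ μ ∈ s, Module.End.maxGenEigenspace (Matrix.toLin' (a.map (Complex.ofReal))) μ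
    ).restrictScalars ℝ).comap (complexify d)

/-- The stable spectral subspace `Eˢ(a)`. -/
def stableSpace {d : ℕ} (a : Matrix (Fin d) (Fin d) ℝ) :
    Submodule ℝ (EuclideanSpace ℝ (Fin d)) := genSpace a {μ : ℂ | ‖μ‖ < 1}

/-- The unstable spectral subspace `Eᵘ(a)`. -/
def unstableSpace {d : ℕ} (a : Matrix (Fin d) (Fin d) ℝ) :
    Submodule ℝ (EuclideanSpace ℝ (Fin d)) := genSpace a {μ : ℂ | 1 < ‖μ‖}

/-- A real matrix is hyperbolic if it has no (complex) eigenvalue of absolute value one. -/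
def IsHyperbolic {d : ℕ} (a : Matrix (Fin d) (Fin d) ℝ) : Prop :=
  ∀ μ : ℂ, Module.End.HasEigenvalue (Matrix.toLin' (a.map (Complex.ofReal))) μ → ‖μ‖ ≠ 1

/-!
A sequence in the kernel of `L` satisfies `x (n + 1) = a n (x n)`, so it is the orbit of `x 0`,
under `a₊` forwards and under `a₋` backwards. Square-summability makes both halves of the orbit
tend to `0`, and for an invertible hyperbolic matrix the vectors whose forward orbit tends to `0`
are exactly those of the stable space: on the unstable space the inverse is power-bounded
(Banach–Steinhaus), so an unstable component cannot shrink. Conversely, the orbit of a stable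
vector is summable: if `(T - μ)ᵏ w = 0` then `‖Tⁿ⁺¹ w‖ ≤ ‖Tⁿ (T - μ) w‖ + ‖μ‖ ‖Tⁿ w‖`, and
induction on `k` applies. Hence evaluation at `0` identifies `ker L` with `Eˢ(a₊) ∩ Eᵘ(a₋)`.
-/

open Finset in
theorem summable_of_succ_le_add_mul {f g : ℕ → ℝ} {r : ℝ} (hf : ∀ n, 0 ≤ f n)
    (hg : Summable g) (hg₀ : ∀ n, 0 ≤ g n) (hr : r < 1)
    (h : ∀ n, f (n + 1) ≤ g n + r * f n) : Summable f := by
  refine summable_of_sum_range_le hf (c := (f 0 + ∑' n, g n) / (1 - r)) fun N => ?_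
  rw [le_div_iff₀ (by linarith)]
  have hstep : ∑ i ∈ range (N + 1), f i ≤ f 0 + ∑' n, g n + r * ∑ i ∈ range N, f i := by
    have hsum := sum_le_sum fun i (_ : i ∈ range N) => h i
    rw [sum_add_distrib, ← mul_sum] at hsum
    have := hg.sum_le_tsum (range N) fun i _ => hg₀ i
    rw [sum_range_succ']
    linarith
  have hmono : ∑ i ∈ range N, f i ≤ ∑ i ∈ range (N + 1), f i := by
    rw [sum_range_succ]
    linarith [hf N]
  nlinarith

theorem Memℓp.tendsto_norm_cofinite_zero {α : Type*} {E : α → Type*}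
    [∀ i, NormedAddCommGroup (E i)] {p : ENNReal} {f : ∀ i, E i} (hf : Memℓp f p)
    (hp : 0 < p.toReal) : Tendsto (fun i => ‖f i‖) cofinite (𝓝 0) := by
  have h := (hf.summable hp).tendsto_cofinite_zero.rpow_const (p := p.toReal⁻¹)
    (Or.inr (by positivity))
  rw [Real.zero_rpow (by positivity)] at h
  exact h.congr fun i => Real.rpow_rpow_inv (norm_nonneg _) hp.ne'

namespace Module.End

section Units

variable {K V : Type*} [Field K] [AddCommGroup V] [Module K V]

theorem maxGenEigenspace_le_maxGenEigenspace_inv (T : (End K V)ˣ) {μ : K} (hμ : μ ≠ 0) :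
    (T : End K V).maxGenEigenspace μ ≤ (↑T⁻¹ : End K V).maxGenEigenspace μ⁻¹ := by
  intro w hw
  obtain ⟨k, hk⟩ := (mem_maxGenEigenspace _ _ _).mp hw
  have hfactor :
      (↑T⁻¹ : End K V) - μ⁻¹ • 1 = (-μ⁻¹ • (↑T⁻¹ : End K V)) * (↑T - μ • 1) := by
    rw [mul_sub, smul_mul_assoc, Units.inv_mul, mul_smul_comm, mul_one, smul_smul, mul_neg,
      mul_inv_cancel₀ hμ]
    module
  have hcomm : Commute (-μ⁻¹ • (↑T⁻¹ : End K V)) (↑T - μ • 1) :=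
    ((Commute.refl (T : End K V)).units_inv_left.sub_right
      ((Commute.one_right _).smul_right μ)).smul_left _
  exact (mem_maxGenEigenspace _ _ _).mpr
    ⟨k, by rw [hfactor, hcomm.mul_pow, mul_apply, hk, map_zero]⟩

theorem maxGenEigenspace_zero_eq_bot (T : (End K V)ˣ) :
    (T : End K V).maxGenEigenspace 0 = ⊥ := by
  refine eq_bot_iff.mpr fun w hw => ?_
  obtain ⟨k, hk⟩ := (mem_maxGenEigenspace _ _ _).mp hw
  rw [zero_smul, sub_zero, ← Units.val_pow_eq_pow_val] at hk
  exact (Submodule.mem_bot K).mpr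
    ((map_eq_zero_iff _ ((isUnit_iff _).mp (T ^ k).isUnit).injective).mp hk)

theorem hasEigenvalue_inv_iff [FiniteDimensional K V] (T : (End K V)ˣ) {μ : K} :
    (↑T⁻¹ : End K V).HasEigenvalue μ ↔ (T : End K V).HasEigenvalue μ⁻¹ := by
  rw [hasEigenvalue_iff_mem_spectrum, hasEigenvalue_iff_mem_spectrum, ← spectrum.map_inv,
    Set.mem_inv]

end Units

section Normed

variable {𝕜 V : Type*} [NormedField 𝕜] [NormedAddCommGroup V] [NormedSpace 𝕜 V]

def stableSubspace (T : End 𝕜 V) : Submodule 𝕜 V :=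
  ⨆ μ ∈ {μ : 𝕜 | ‖μ‖ < 1}, T.maxGenEigenspace μ

def unstableSubspace (T : End 𝕜 V) : Submodule 𝕜 V :=
  ⨆ μ ∈ {μ : 𝕜 | 1 < ‖μ‖}, T.maxGenEigenspace μ

def summableOrbits (T : End 𝕜 V) : Submodule 𝕜 V where
  carrier := {w | Summable fun n : ℕ => ‖(T ^ n) w‖}
  zero_mem' := by simp [summable_zero]
  add_mem' hv hw :=
    (hv.add hw).of_nonneg_of_le (fun _ => norm_nonneg _) fun n => by
      simpa only [map_add] using norm_add_le _ _
  smul_mem' c w hw := by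
    simpa only [Set.mem_ofPred_eq, map_smul, norm_smul] using hw.mul_left ‖c‖

theorem summable_norm_pow_apply_of_mem_maxGenEigenspace {T : End 𝕜 V} {μ : 𝕜}
    (hμ : ‖μ‖ < 1) {w : V} (hw : w ∈ T.maxGenEigenspace μ) : Summable fun n : ℕ => ‖(T ^ n) w‖ := by
  obtain ⟨k, hk⟩ := (mem_maxGenEigenspace _ _ _).mp hw
  clear hw
  induction k generalizing w with
  | zero => simp_all
  | succ k ih =>
    have hshift : Summable fun n : ℕ => ‖(T ^ n) ((T - μ • 1) w)‖ :=
      ih (by rwa [pow_succ, mul_apply] at hk)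
    refine summable_of_succ_le_add_mul (fun _ => norm_nonneg _) hshift (fun _ => norm_nonneg _) hμ
      fun n => ?_
    have hsplit : (T ^ (n + 1)) w = (T ^ n) ((T - μ • 1) w) + μ • (T ^ n) w := by
      rw [pow_succ, mul_apply, ← map_smul, ← map_add]
      simp
    rw [hsplit, ← norm_smul]
    exact norm_add_le _ _

theorem stableSubspace_le_summableOrbits (T : End 𝕜 V) : T.stableSubspace ≤ T.summableOrbits :=
  iSup₂_le fun _ hμ _ hw => summable_norm_pow_apply_of_mem_maxGenEigenspace hμ hw

theorem unstableSubspace_eq_stableSubspace_inv (T : (End 𝕜 V)ˣ) :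
    (T : End 𝕜 V).unstableSubspace = (↑T⁻¹ : End 𝕜 V).stableSubspace := by
  apply le_antisymm
  · refine iSup₂_le fun μ (hμ : 1 < ‖μ‖) => ?_
    refine (maxGenEigenspace_le_maxGenEigenspace_inv T
      (norm_pos_iff.mp (one_pos.trans hμ))).trans ?_
    exact le_iSup₂_of_le (f := fun μ _ => (↑T⁻¹ : End 𝕜 V).maxGenEigenspace μ) μ⁻¹
      (by simpa using inv_lt_one_of_one_lt₀ hμ) le_rfl
  · refine iSup₂_le fun μ (hμ : ‖μ‖ < 1) => ?_
    rcases eq_or_ne μ 0 with rfl | hμ₀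
    · rw [maxGenEigenspace_zero_eq_bot]
      exact bot_le
    refine (inv_inv T ▸ maxGenEigenspace_le_maxGenEigenspace_inv T⁻¹ hμ₀).trans ?_
    exact le_iSup₂_of_le (f := fun μ _ => (T : End 𝕜 V).maxGenEigenspace μ) μ⁻¹
      (by simpa using (one_lt_inv₀ (norm_pos_iff.mpr hμ₀)).mpr hμ) le_rfl

theorem mapsTo_unstableSubspace_of_commute {T g : End 𝕜 V} (h : Commute T g) :
    Set.MapsTo g T.unstableSubspace T.unstableSubspace := by
  have hle : T.unstableSubspace ≤ T.unstableSubspace.comap g := iSup₂_le fun μ hμ _ hx =>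
    le_iSup₂ (f := fun μ _ => T.maxGenEigenspace μ) μ hμ (mapsTo_maxGenEigenspace_of_comm h μ hx)
  exact fun _ hw => hle hw

end Normed

section FiniteDimensional

variable {𝕜 V : Type*} [NontriviallyNormedField 𝕜] [NormedAddCommGroup V] [NormedSpace 𝕜 V]
  [FiniteDimensional 𝕜 V]

theorem stableSubspace_sup_unstableSubspace [IsAlgClosed 𝕜] {T : End 𝕜 V}
    (hT : ∀ μ, T.HasEigenvalue μ → ‖μ‖ ≠ 1) :
    T.stableSubspace ⊔ T.unstableSubspace = ⊤ := by
  rw [eq_top_iff, ← iSup_maxGenEigenspace_eq_top T]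
  refine iSup_le fun μ => ?_
  rcases lt_trichotomy ‖μ‖ 1 with hμ | hμ | hμ
  · exact le_sup_of_le_left (le_iSup₂ (f := fun μ _ => T.maxGenEigenspace μ) μ hμ)
  · by_cases hbot : T.maxGenEigenspace μ = ⊥
    · exact hbot ▸ bot_le
    · exact absurd hμ (hT μ (HasUnifEigenvalue.lt zero_lt_one hbot))
  · exact le_sup_of_le_right (le_iSup₂ (f := fun μ _ => T.maxGenEigenspace μ) μ hμ)

theorem exists_norm_pow_apply_le_of_mem_stableSubspace [CompleteSpace 𝕜] (S : End 𝕜 V) :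
    ∃ C, ∀ n : ℕ, ∀ w ∈ S.stableSubspace, ‖(S ^ n) w‖ ≤ C * ‖w‖ := by
  have := FiniteDimensional.complete 𝕜 S.stableSubspace
  let g : ℕ → S.stableSubspace →L[𝕜] V := fun n =>
    LinearMap.toContinuousLinearMap ((S ^ n) ∘ₗ S.stableSubspace.subtype)
  obtain ⟨C, hC⟩ := banach_steinhaus (g := g) fun w =>
    ⟨_, fun n => (stableSubspace_le_summableOrbits S w.2).le_tsum n fun _ _ => norm_nonneg _⟩
  exact ⟨C, fun n w hw =>
    ((g n).le_opNorm ⟨w, hw⟩).trans (mul_le_mul_of_nonneg_right (hC n) (norm_nonneg _))⟩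

theorem mem_stableSubspace_of_tendsto [CompleteSpace 𝕜] [IsAlgClosed 𝕜] (T : (End 𝕜 V)ˣ)
    (hT : ∀ μ, (T : End 𝕜 V).HasEigenvalue μ → ‖μ‖ ≠ 1) {w : V}
    (hw : Tendsto (fun n : ℕ => ((T : End 𝕜 V) ^ n) w) atTop (𝓝 0)) :
    w ∈ (T : End 𝕜 V).stableSubspace := by
  obtain ⟨ws, hws, wu, hwu, rfl⟩ := Submodule.mem_sup.mp
    ((stableSubspace_sup_unstableSubspace hT).ge (Submodule.mem_top (x := w)))
  suffices wu = 0 by rwa [this, add_zero]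
  have hs : Tendsto (fun n : ℕ => ((T : End 𝕜 V) ^ n) ws) atTop (𝓝 0) :=
    tendsto_zero_iff_norm_tendsto_zero.mpr
      (stableSubspace_le_summableOrbits _ hws).tendsto_atTop_zero
  have hu : Tendsto (fun n : ℕ => ((T : End 𝕜 V) ^ n) wu) atTop (𝓝 0) := by
    simpa using hw.sub hs
  obtain ⟨C, hC⟩ := exists_norm_pow_apply_le_of_mem_stableSubspace (↑T⁻¹ : End 𝕜 V)
  have hbound (n : ℕ) : ‖wu‖ ≤ C * ‖((T : End 𝕜 V) ^ n) wu‖ := by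
    have hmem := unstableSubspace_eq_stableSubspace_inv T ▸
      mapsTo_unstableSubspace_of_commute ((Commute.refl _).pow_right n) hwu
    have hinv : ((↑T⁻¹ : End 𝕜 V) ^ n) (((T : End 𝕜 V) ^ n) wu) = wu := by
      rw [← mul_apply, ← Units.val_pow_eq_pow_val, ← Units.val_pow_eq_pow_val,
        ← Units.val_mul, inv_pow, inv_mul_cancel, Units.val_one, one_apply]
    simpa only [hinv] using hC n _ hmem
  exact norm_le_zero_iff.mp (ge_of_tendsto' (by simpa using hu.norm.const_mul C) hbound)

end FiniteDimensional

end Module.End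

section Complexification

variable {d : ℕ}

def complexEnd (d : ℕ) : Matrix (Fin d) (Fin d) ℝ →* Module.End ℂ (Fin d → ℂ) :=
  Matrix.toLinAlgEquiv'.toMonoidHom.comp Complex.ofRealHom.mapMatrix.toMonoidHom

theorem mem_stableSpace_iff {a : Matrix (Fin d) (Fin d) ℝ} {v : EuclideanSpace ℝ (Fin d)} :
    v ∈ stableSpace a ↔ complexify d v ∈ (complexEnd d a).stableSubspace := Iff.rfl

theorem unstableSpace_eq_comap (a : Matrix (Fin d) (Fin d) ℝ) :
    unstableSpace a =
      ((complexEnd d a).unstableSubspace.restrictScalars ℝ).comap (complexify d) := rfl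

theorem isHyperbolic_iff {a : Matrix (Fin d) (Fin d) ℝ} :
    IsHyperbolic a ↔ ∀ μ, (complexEnd d a).HasEigenvalue μ → ‖μ‖ ≠ 1 := Iff.rfl

theorem complexify_matOp (M : Matrix (Fin d) (Fin d) ℝ) (v : EuclideanSpace ℝ (Fin d)) :
    complexify d (matOp M v) = complexEnd d M (complexify d v) := by
  ext i
  simp [complexify, complexEnd, Matrix.mulVec, dotProduct]

theorem complexify_matOp_pow (M : Matrix (Fin d) (Fin d) ℝ) (n : ℕ)
    (v : EuclideanSpace ℝ (Fin d)) :
    complexify d (matOp (M ^ n) v) = (complexEnd d M ^ n) (complexify d v) := by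
  rw [complexify_matOp, map_pow]

theorem exists_norm_le_mul_norm_complexify :
    ∃ K : ℝ, ∀ v : EuclideanSpace ℝ (Fin d), ‖v‖ ≤ K * ‖complexify d v‖ := by
  have hinj : Function.Injective (complexify d) := fun v w h => by
    ext i
    simpa [complexify] using congrFun h i
  obtain ⟨K, -, hK⟩ := (complexify d).injective_iff_antilipschitz.mp hinj
  exact ⟨K, ZeroHomClass.bound_of_antilipschitz (complexify d) hK⟩

theorem summable_norm_matOp_pow_apply {a : Matrix (Fin d) (Fin d) ℝ}
    {v : EuclideanSpace ℝ (Fin d)} (hv : v ∈ stableSpace a) :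
    Summable fun n : ℕ => ‖matOp (a ^ n) v‖ := by
  obtain ⟨K, hK⟩ := exists_norm_le_mul_norm_complexify (d := d)
  have hsum := Module.End.stableSubspace_le_summableOrbits _ (mem_stableSpace_iff.mp hv)
  refine (hsum.mul_left K).of_nonneg_of_le (fun _ => norm_nonneg _) fun n => ?_
  simpa only [complexify_matOp_pow] using hK (matOp (a ^ n) v)

variable (u : (Matrix (Fin d) (Fin d) ℝ)ˣ)

theorem mem_stableSpace_of_tendsto (hu : IsHyperbolic (u : Matrix (Fin d) (Fin d) ℝ))
    {v : EuclideanSpace ℝ (Fin d)}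
    (hv : Tendsto (fun n : ℕ => matOp ((u : Matrix (Fin d) (Fin d) ℝ) ^ n) v) atTop (𝓝 0)) :
    v ∈ stableSpace (u : Matrix (Fin d) (Fin d) ℝ) := by
  have hc := ((complexify d).continuous_of_finiteDimensional.tendsto 0).comp hv
  simp only [Function.comp_def, complexify_matOp_pow, map_zero] at hc
  exact Module.End.mem_stableSubspace_of_tendsto (Units.map (complexEnd d) u) hu hc

theorem unstableSpace_eq_stableSpace_inv :
    unstableSpace (u : Matrix (Fin d) (Fin d) ℝ) =
      stableSpace (↑u⁻¹ : Matrix (Fin d) (Fin d) ℝ) := by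
  rw [unstableSpace_eq_comap, ← Units.coe_map (complexEnd d),
    Module.End.unstableSubspace_eq_stableSubspace_inv, Units.coe_map_inv]
  rfl

variable {u} in
theorem IsHyperbolic.units_inv (hu : IsHyperbolic (u : Matrix (Fin d) (Fin d) ℝ)) :
    IsHyperbolic (↑u⁻¹ : Matrix (Fin d) (Fin d) ℝ) := by
  rw [isHyperbolic_iff] at hu ⊢
  intro μ hμ
  rw [← Units.coe_map_inv (complexEnd d), Module.End.hasEigenvalue_inv_iff] at hμ
  simpa using hu _ hμ

end Complexification

section Orbits

variable {d : ℕ} (u : (Matrix (Fin d) (Fin d) ℝ)ˣ) (x : ℤ → EuclideanSpace ℝ (Fin d))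

theorem matOp_mul_apply (A B : Matrix (Fin d) (Fin d) ℝ) (v : EuclideanSpace ℝ (Fin d)) :
    matOp (A * B) v = matOp A (matOp B v) := by
  rw [show matOp (A * B) = matOp A * matOp B from map_mul _ _ _]
  rfl

theorem matOp_zpow_add_one (n : ℤ) (v : EuclideanSpace ℝ (Fin d)) :
    matOp ↑(u ^ (n + 1)) v = matOp ↑u (matOp ↑(u ^ n) v) := by
  rw [add_comm, zpow_one_add, Units.val_mul, matOp_mul_apply]

theorem matOp_inv_matOp (v : EuclideanSpace ℝ (Fin d)) : matOp ↑u⁻¹ (matOp ↑u v) = v := by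
  rw [← matOp_mul_apply, Units.inv_mul, show matOp 1 = 1 from map_one _]
  rfl

theorem forall_nonneg_succ_eq_matOp_iff :
    (∀ n, 0 ≤ n → x (n + 1) = matOp ↑u (x n)) ↔
      ∀ n, 0 ≤ n → x n = matOp ↑(u ^ n) (x 0) := by
  refine ⟨fun h n hn => ?_, fun h n hn => ?_⟩
  · induction n, hn using Int.leInduction with
    | base => simp
    | succ n hn ih => rw [h n hn, ih, matOp_zpow_add_one]
  · rw [h (n + 1) (by omega), h n hn, matOp_zpow_add_one]

theorem forall_neg_succ_eq_matOp_iff :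
    (∀ n < 0, x (n + 1) = matOp ↑u (x n)) ↔ ∀ n ≤ 0, x n = matOp ↑(u ^ n) (x 0) := by
  refine ⟨fun h n hn => ?_, fun h n hn => ?_⟩
  · induction n, hn using Int.leInductionDown with
    | base => simp
    | pred n hn ih =>
      have hstep := h (n - 1) (by omega)
      rw [sub_add_cancel, ih, ← sub_add_cancel n 1, matOp_zpow_add_one, add_sub_cancel_right]
        at hstep
      simpa only [matOp_inv_matOp] using congrArg (matOp ↑u⁻¹) hstep.symm
  · rw [h (n + 1) (by omega), h n hn.le, matOp_zpow_add_one]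

end Orbits

section TwoSidedOrbits

variable {d : ℕ} (up um : (Matrix (Fin d) (Fin d) ℝ)ˣ)

abbrev connectingSpace : Submodule ℝ (EuclideanSpace ℝ (Fin d)) :=
  stableSpace (up : Matrix (Fin d) (Fin d) ℝ) ⊓ unstableSpace (um : Matrix (Fin d) (Fin d) ℝ)

def IsTwoSidedOrbit (x : ℤ → EuclideanSpace ℝ (Fin d)) : Prop :=
  (∀ n : ℤ, 0 ≤ n → x n = matOp ↑(up ^ n) (x 0)) ∧
    ∀ n : ℤ, n ≤ 0 → x n = matOp ↑(um ^ n) (x 0)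

def twoSidedOrbit : EuclideanSpace ℝ (Fin d) →ₗ[ℝ] ℤ → EuclideanSpace ℝ (Fin d) :=
  LinearMap.pi fun n =>
    if 0 ≤ n then (matOp ↑(up ^ n)).toLinearMap else (matOp ↑(um ^ n)).toLinearMap

variable {up um} {x : ℤ → EuclideanSpace ℝ (Fin d)}

theorem isTwoSidedOrbit_iff_forall_succ :
    IsTwoSidedOrbit up um x ↔
      ∀ n, x (n + 1) = matOp (if 0 ≤ n then ↑up else ↑um) (x n) := by
  rw [IsTwoSidedOrbit, ← forall_nonneg_succ_eq_matOp_iff, ← forall_neg_succ_eq_matOp_iff]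
  refine ⟨fun ⟨hpos, hneg⟩ n => ?_, fun h => ⟨fun n hn => ?_, fun n hn => ?_⟩⟩
  · split_ifs with hn
    exacts [hpos n hn, hneg n (not_le.mp hn)]
  · simpa only [if_pos hn] using h n
  · simpa only [if_neg (not_le.mpr hn)] using h n

theorem IsTwoSidedOrbit.apply_natCast (hx : IsTwoSidedOrbit up um x) (n : ℕ) :
    x n = matOp ((up : Matrix (Fin d) (Fin d) ℝ) ^ n) (x 0) := by
  rw [hx.1 n n.cast_nonneg, zpow_natCast, Units.val_pow_eq_pow_val]

theorem IsTwoSidedOrbit.apply_neg_natCast (hx : IsTwoSidedOrbit up um x) (n : ℕ) :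
    x (-n) = matOp ((↑um⁻¹ : Matrix (Fin d) (Fin d) ℝ) ^ n) (x 0) := by
  rw [hx.2 (-n) (by omega), zpow_neg, zpow_natCast, ← inv_pow, Units.val_pow_eq_pow_val]

theorem IsTwoSidedOrbit.mem_connectingSpace (hx : IsTwoSidedOrbit up um x)
    (hℓ : Memℓp x 2) (hup : IsHyperbolic (up : Matrix (Fin d) (Fin d) ℝ))
    (hum : IsHyperbolic (um : Matrix (Fin d) (Fin d) ℝ)) :
    x 0 ∈ connectingSpace up um := by
  have hlim := hℓ.tendsto_norm_cofinite_zero (by norm_num)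
  have halong {f : ℕ → ℤ} (hf : f.Injective) : Tendsto (fun n => x (f n)) atTop (𝓝 0) :=
    tendsto_zero_iff_norm_tendsto_zero.mpr (Nat.cofinite_eq_atTop ▸ hlim.comp hf.tendsto_cofinite)
  refine ⟨mem_stableSpace_of_tendsto up hup ?_, ?_⟩
  · simpa only [hx.apply_natCast] using halong Nat.cast_injective
  · rw [unstableSpace_eq_stableSpace_inv]
    refine mem_stableSpace_of_tendsto um⁻¹ hum.units_inv ?_
    simpa only [hx.apply_neg_natCast] using
      halong (f := fun n : ℕ => -(n : ℤ)) (neg_injective.comp Nat.cast_injective)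

theorem IsTwoSidedOrbit.memℓp (hx : IsTwoSidedOrbit up um x)
    (h₀ : x 0 ∈ connectingSpace up um) :
    Memℓp x 2 := by
  have hsum : Summable fun n => ‖x n‖ := by
    refine .of_nat_of_neg ?_ ?_
    · simpa only [hx.apply_natCast] using summable_norm_matOp_pow_apply h₀.1
    · simpa only [hx.apply_neg_natCast] using
        summable_norm_matOp_pow_apply (unstableSpace_eq_stableSpace_inv um ▸ h₀.2)
  exact (memℓp_gen (p := 1) (by simpa using hsum)).of_exponent_ge (by norm_num)

theorem IsTwoSidedOrbit.eq_twoSidedOrbit (hx : IsTwoSidedOrbit up um x) :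
    x = twoSidedOrbit up um (x 0) := by
  ext1 n
  by_cases hn : 0 ≤ n
  · simp [twoSidedOrbit, hn, hx.1 n hn]
  · simp [twoSidedOrbit, hn, hx.2 n (by omega)]

variable (up um)

theorem twoSidedOrbit_apply_zero (v : EuclideanSpace ℝ (Fin d)) :
    twoSidedOrbit up um v 0 = v := by
  simp [twoSidedOrbit]

theorem isTwoSidedOrbit_twoSidedOrbit (v : EuclideanSpace ℝ (Fin d)) :
    IsTwoSidedOrbit up um (twoSidedOrbit up um v) := by
  refine ⟨fun n hn => ?_, fun n hn => ?_⟩ <;> rw [twoSidedOrbit_apply_zero]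
  · simp [twoSidedOrbit, hn]
  · rcases hn.lt_or_eq with hn | rfl
    · simp [twoSidedOrbit, not_le.mpr hn]
    · simp [twoSidedOrbit_apply_zero]

def twoSidedOrbitLp :
    ↥(connectingSpace up um) →ₗ[ℝ] L2 d :=
  (twoSidedOrbit up um ∘ₗ Submodule.subtype _).codRestrict
    (lpSubmodule ℝ (fun _ : ℤ => EuclideanSpace ℝ (Fin d)) 2) fun v =>
      (isTwoSidedOrbit_twoSidedOrbit up um v).memℓp (by simp [twoSidedOrbit_apply_zero])

theorem coe_twoSidedOrbitLp
    (v : ↥(connectingSpace up um)) :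
    ⇑(twoSidedOrbitLp up um v) = twoSidedOrbit up um v := rfl

theorem twoSidedOrbitLp_injective : Function.Injective (twoSidedOrbitLp up um) := by
  intro v w h
  have h₀ := congrFun (congrArg (⇑) h) 0
  rw [coe_twoSidedOrbitLp, coe_twoSidedOrbitLp, twoSidedOrbit_apply_zero,
    twoSidedOrbit_apply_zero] at h₀
  exact Subtype.ext h₀

theorem range_twoSidedOrbitLp :
    (LinearMap.range (twoSidedOrbitLp up um) : Set (L2 d)) =
      {x : L2 d | x 0 ∈ connectingSpace up um ∧
        IsTwoSidedOrbit up um x} := by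
  ext x
  constructor
  · rintro ⟨v, rfl⟩
    rw [Set.mem_ofPred_eq, coe_twoSidedOrbitLp, twoSidedOrbit_apply_zero]
    exact ⟨v.2, isTwoSidedOrbit_twoSidedOrbit up um v⟩
  · rintro ⟨h₀, hx⟩
    exact ⟨⟨x 0, h₀⟩, lp.ext hx.eq_twoSidedOrbit.symm⟩

end TwoSidedOrbits

/-- For the piecewise-constant asymptotically hyperbolic system `a_n = a₊` (`n ≥ 0`),
`a_n = a₋` (`n < 0`), the kernel of `(Lx)(n) = x(n+1) − a_n x(n)` on `ℓ²(ℤ, ℝᵈ)`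
consists exactly of the sequences `x` with `x(0) ∈ Eˢ(a₊) ∩ Eᵘ(a₋)`,
`x(n) = a₊ⁿ x(0)` for `n ≥ 0` and `x(n) = a₋ⁿ x(0)` for `n ≤ 0`; in particular
`dim ker L = dim (Eˢ(a₊) ∩ Eᵘ(a₋))`. -/
theorem kernel_of_piecewise_constant_system {d : ℕ}
    (up um : (Matrix (Fin d) (Fin d) ℝ)ˣ)
    (aplus aminus : Matrix (Fin d) (Fin d) ℝ)
    (hup : (up : Matrix (Fin d) (Fin d) ℝ) = aplus)
    (hum : (um : Matrix (Fin d) (Fin d) ℝ) = aminus)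
    (hplus_hyp : IsHyperbolic aplus) (hminus_hyp : IsHyperbolic aminus)
    (a : ℤ → Matrix (Fin d) (Fin d) ℝ)
    (ha : ∀ n : ℤ, a n = if 0 ≤ n then aplus else aminus)
    (L : L2 d →L[ℝ] L2 d)
    (hL : ∀ (x : L2 d) (n : ℤ), (L x) n = x (n + 1) - matOp (a n) (x n)) :
    ((LinearMap.ker (L : L2 d →ₗ[ℝ] L2 d) : Set (L2 d)) =
      {x : L2 d | x 0 ∈ stableSpace aplus ⊓ unstableSpace aminus ∧
        (∀ n : ℤ, 0 ≤ n → x n = matOp ((up ^ n : (Matrix (Fin d) (Fin d) ℝ)ˣ) : Matrix (Fin d) (Fin d) ℝ) (x 0)) ∧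
        (∀ n : ℤ, n ≤ 0 → x n = matOp ((um ^ n : (Matrix (Fin d) (Fin d) ℝ)ˣ) : Matrix (Fin d) (Fin d) ℝ) (x 0))}) ∧
    Module.finrank ℝ (LinearMap.ker (L : L2 d →ₗ[ℝ] L2 d)) =
      Module.finrank ℝ ↥(stableSpace aplus ⊓ unstableSpace aminus) := by
  subst hup hum
  have hker (x : L2 d) :
      x ∈ LinearMap.ker (L : L2 d →ₗ[ℝ] L2 d) ↔ IsTwoSidedOrbit up um x := by
    rw [LinearMap.mem_ker, ContinuousLinearMap.coe_coe, isTwoSidedOrbit_iff_forall_succ]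
    refine ⟨fun h n => ?_, fun h => lp.ext (funext fun n => ?_)⟩
    · have hn := hL x n
      rw [h, lp.coeFn_zero, Pi.zero_apply, eq_comm, sub_eq_zero, ha] at hn
      exact hn
    · rw [hL, ha, h n, sub_self, lp.coeFn_zero, Pi.zero_apply]
  have hset : (LinearMap.ker (L : L2 d →ₗ[ℝ] L2 d) : Set (L2 d)) =
      {x : L2 d | x 0 ∈ connectingSpace up um ∧ IsTwoSidedOrbit up um x} :=
    Set.ext fun x => ⟨fun h => ⟨((hker x).mp h).mem_connectingSpace x.2
      hplus_hyp hminus_hyp, (hker x).mp h⟩, fun h => (hker x).mpr h.2⟩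
  refine ⟨hset, ?_⟩
  rw [SetLike.coe_injective (hset.trans (range_twoSidedOrbitLp up um).symm),
    LinearMap.finrank_range_of_inj (twoSidedOrbitLp_injective up um)]
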